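/- Let x, y be strings of length n, let 0 < d ≤ n, and let L = ⌊log₂ d⌋. With D^i defined as in the FSM recursion initialized with D^{-1} ≡ true, the disjunction ⋁_{j=d}^{n} D^{L}[j] is true if and only if there exists a position j with 0 ≤ j ≤ n - d such that x[j .. j+d-1] = y[j .. j+d-1]. -/
import Mathlib


/-- `x[a .. a+len-1]`. -/
def substr {α : Type*} (x : List α) (a len : ℕ) : List α := (x.drop a).take len

/-- `psum d m = Σ_{i=0}^{m-1} bit_i(d)·2^i`, i.e. the paper's `p(m-1)`. -/
def psum (d m : ℕ) : ℕ := ∑ i ∈ Finset.range m, if d.testBit i then 2 ^ i else 0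

/-- The FSM recursion on Boolean vectors. `Dvec x y d init i j` is the value
`D^{i-1}[j]`: `Dvec x y d init 0 = init` is the initialization `D^{-1}`, and
for each bit `i` of `d`, `D^i = D^{i-1}` if `bit_i(d) = 0`, while if
`bit_i(d) = 1` then `D^i` is the rightward shift by `2^i` of the pointwise
conjunction of `D^{i-1}` with `λ^i` (positions `< 2^i` becoming `false`):
`D^i[j] = D^{i-1}[j - 2^i] ∧ λ^i[j - 2^i]` for `j ≥ 2^i`, where
`λ^i[j] = (x[j..j+2^i-1] = y[j..j+2^i-1])`. -/
def Dvec {α : Type*} [DecidableEq α] (x y : List α) (d : ℕ) (init : ℕ → Bool) :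
    ℕ → ℕ → Bool
  | 0, j => init j
  | i + 1, j =>
      if d.testBit i then
        if 2 ^ i ≤ j then
          Dvec x y d init i (j - 2 ^ i) &&
            decide (substr x (j - 2 ^ i) (2 ^ i) = substr y (j - 2 ^ i) (2 ^ i))
        else false
      else Dvec x y d init i j
lemma substr_split {α : Type*} {x y : List α}
    (h : x.length = y.length) (a m k : ℕ) :
    substr x a (m + k) = substr y a (m + k) ↔
      substr x a m = substr y a m ∧ substr x (a + m) k = substr y (a + m) k := by
  have hx : substr x a (m + k) = substr x a m ++ substr x (a + m) k := by
    simp [substr, List.take_add, List.drop_drop]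
  have hy : substr y a (m + k) = substr y a m ++ substr y (a + m) k := by
    simp [substr, List.take_add, List.drop_drop]
  rw [hx, hy]
  constructor
  · intro he
    exact List.append_inj he (by simp [substr, h])
  · rintro ⟨h1, h2⟩; rw [h1, h2]

lemma dvec_iff {α : Type*} [DecidableEq α] {x y : List α} (h : x.length = y.length)
    (d : ℕ) : ∀ i j, Dvec x y d (fun _ => true) i j = true ↔
      psum d i ≤ j ∧
        substr x (j - psum d i) (psum d i) = substr y (j - psum d i) (psum d i)
  | 0, j => by simp [Dvec, psum, substr]
  | i + 1, j => by
    by_cases hb : d.testBit i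
    · have hp : psum d (i + 1) = psum d i + 2 ^ i := by
        simp [psum, Finset.sum_range_succ, hb]
      by_cases hj : 2 ^ i ≤ j
      · simp only [Dvec, hb, if_true, hj, Bool.and_eq_true, decide_eq_true_eq]
        rw [dvec_iff h d i (j - 2 ^ i), hp]
        constructor
        · rintro ⟨⟨hle, he1⟩, he2⟩
          refine ⟨by omega, ?_⟩
          rw [substr_split h]
          have e1 : j - (psum d i + 2 ^ i) = j - 2 ^ i - psum d i := by omega
          have e2 : j - 2 ^ i - psum d i + psum d i = j - 2 ^ i := by omega
          rw [e1, e2]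
          exact ⟨he1, he2⟩
        · rintro ⟨hle, he⟩
          rw [substr_split h] at he
          have e1 : j - (psum d i + 2 ^ i) = j - 2 ^ i - psum d i := by omega
          have e2 : j - 2 ^ i - psum d i + psum d i = j - 2 ^ i := by omega
          rw [e1, e2] at he
          exact ⟨⟨by omega, he.1⟩, he.2⟩
      · simp only [Dvec, hb, if_true, hj, if_false, hp]
        constructor
        · intro hc; exact absurd hc (by simp)
        · intro hc; omega
    · have hp : psum d (i + 1) = psum d i := by
        simp [psum, Finset.sum_range_succ, hb]
      simp only [Dvec, hb, if_false, hp]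
      exact dvec_iff h d i j

lemma psum_eq_mod (d : ℕ) : ∀ m, psum d m = d % 2 ^ m
  | 0 => by simp [psum, Nat.mod_one]
  | m + 1 => by
    have h2 : (2 : ℕ) ^ (m + 1) = 2 ^ m * 2 := by ring
    rw [h2, Nat.mod_mul, ← psum_eq_mod d m]
    have hb : d.testBit m = decide (d / 2 ^ m % 2 = 1) := Nat.testBit_eq_decide_div_mod_eq
    have hlt : d / 2 ^ m % 2 < 2 := Nat.mod_lt _ (by norm_num)
    simp only [psum, Finset.sum_range_succ]
    by_cases hbit : d.testBit m
    · have : d / 2 ^ m % 2 = 1 := by simpa [hb] using hbit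
      simp [hbit, this, mul_comm]
    · have : d / 2 ^ m % 2 = 0 := by
        have : ¬ (d / 2 ^ m % 2 = 1) := by simpa [hb] using hbit
        omega
      simp [hbit, this]

/-- Correctness for the SFSC problem: with `D^{-1} ≡ true` and
`L = ⌊log₂ d⌋`, the disjunction `⋁_{j=d}^{n} D^L[j]` is true iff there is a
position `j` with `j + d ≤ n` such that `x[j..j+d-1] = y[j..j+d-1]`
(here `D^L = Dvec x y d init (L+1)`). -/
theorem stmt6 {α : Type*} [DecidableEq α] (n d : ℕ) (x y : List α)
    (hx : x.length = n) (hy : y.length = n) (hd0 : 0 < d) (hdn : d ≤ n) :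
    (∃ j, d ≤ j ∧ j ≤ n ∧
        Dvec x y d (fun _ => true) (Nat.log2 d + 1) j = true) ↔
      ∃ j, j + d ≤ n ∧ substr x j d = substr y j d := by
  have hlen : x.length = y.length := by rw [hx, hy]
  have hpd : psum d (Nat.log2 d + 1) = d := by
    rw [psum_eq_mod]
    exact Nat.mod_eq_of_lt Nat.lt_log2_self
  constructor
  · rintro ⟨j, hdj, hjn, hD⟩
    rw [dvec_iff hlen d _ j, hpd] at hD
    exact ⟨j - d, by omega, hD.2⟩
  · rintro ⟨j, hjd, he⟩
    refine ⟨j + d, by omega, by omega, ?_⟩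
    rw [dvec_iff hlen d _ (j + d), hpd]
    simpa using he
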